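/- Let 𝓡 be right amenable, let ℱ = (F_i)_{i∈I} be a right Følner net in 𝓡, let X be a κ-strongly irreducible subshift of Q^M with |X| ≥ 2, let Y be a subset of X, and let T be a ⟨θ,κ,θ'⟩-tiling of 𝓡 such that Y_{B(t,θ)} ⊊ X_{B(t,θ)} for every t ∈ T. Then Ent_ℱ(Y) < Ent_ℱ(X). -/

import Mathlib

/-!
Strong irreducibility makes the tiles independent of each other: inside a finite window `Ω`,
a point of `X` can be altered on the `θ`-ball of any tile lying in `Ω`, to a pattern of `X`
that no point of `Y` shows there, without changing it at the cells of `Ω` farther than `κ` from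
that ball. Since the fibres of the restriction to these far cells have at most
`C = |Q| ^ (|S| + 1) ^ (θ + κ)` elements, every tile inside `Ω` cuts the number of
`Ω`-patterns that look like `Y` on the tiles by a factor `C / (C + 1)`. The `θ'`-balls around
the tiles cover the `(θ + θ')`-interior of `Ω`, so up to the Følner boundary there are at least
`|Ω| / (|S| + 1) ^ θ'` such tiles, and `log |Y_Ω| / |Ω|` stays a fixed amount below
`log |X_Ω| / |Ω|`. If `Y` is empty, a single point of `X` plays its role: it is still
constrained on every tile because `X` takes two values at every cell.
-/

open Filter Set

namespace GoE

variable {G M Q : Type*}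

/-- A left homogeneous space `⟨M, G, ▷⟩` together with a coordinate system
`⟨m₀, (g_{m₀,m})_{m∈M}⟩`: a cell space with finite stabiliser `G₀` of `m₀`. -/
structure CellSpace (G M : Type*) [Group G] where
  act : G → M → M
  one_act : ∀ m : M, act 1 m = m
  mul_act : ∀ (g h : G) (m : M), act (g * h) m = act g (act h m)
  transitive : ∀ m m' : M, ∃ g : G, act g m = m'
  m0 : M
  coord : M → G
  coord_act : ∀ m : M, act (coord m) m0 = m
  stab_finite : {g : G | act g m0 = m0}.Finite

variable [Group G]

namespace CellSpace

/-- Membership in the stabiliser `G₀` of `m₀`. -/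
def stab (R : CellSpace G M) (g : G) : Prop := R.act g R.m0 = R.m0

/-- The induced right semi-action `m ↝ gG₀ = g_{m₀,m} g ▷ m₀`, on representatives. -/
def sAct (R : CellSpace G M) (m : M) (g : G) : M := R.act (R.coord m * g) R.m0

/-- `m ↝ ι n` where `ι : M → G/G₀`, `n ↦ G_{m₀,n}` is the canonical identification. -/
def nAct (R : CellSpace G M) (m n : M) : M := R.act (R.coord m * R.coord n) R.m0

/-- `S ⊆ G` represents a finite symmetric right generating set of cosets
(`G₀ · S ⊆ S`, `S⁻¹ ⊆ S`, and `S` generates). -/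
structure IsRightGenSet (R : CellSpace G M) (S : Set G) : Prop where
  finite : S.Finite
  saturated : ∀ s ∈ S, ∀ g₀ : G, R.stab g₀ → s * g₀ ∈ S
  stab_mul : ∀ g₀ : G, R.stab g₀ → ∀ s ∈ S, g₀ * s ∈ S
  symm : ∀ s ∈ S, s⁻¹ ∈ S
  generates : ∀ m : M, ∃ (k : ℕ) (f : ℕ → M), f 0 = R.m0 ∧ f k = m ∧
    ∀ i < k, ∃ s ∈ S, f (i + 1) = R.sAct (f i) s

/-- There is an `S`-path of length `n` from `m` to `m'` in the `S`-Cayley graph. -/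
def Chain (R : CellSpace G M) (S : Set G) (m m' : M) (n : ℕ) : Prop :=
  ∃ f : ℕ → M, f 0 = m ∧ f n = m' ∧ ∀ i < n, ∃ s ∈ S, f (i + 1) = R.sAct (f i) s

/-- The `S`-metric `d`. -/
noncomputable def dist (R : CellSpace G M) (S : Set G) (m m' : M) : ℕ :=
  sInf {n : ℕ | R.Chain S m m' n}

/-- The ball `B(m, ρ)` of radius `ρ` centred at `m`. -/
noncomputable def ball (R : CellSpace G M) (S : Set G) (m : M) (ρ : ℕ) : Set M :=
  {m' : M | R.dist S m m' ≤ ρ}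

/-- The `θ`-interior `A^{-θ}` of `A`. -/
noncomputable def inter (R : CellSpace G M) (S : Set G) (A : Set M) (θ : ℕ) : Set M :=
  {m ∈ A | R.ball S m θ ⊆ A}

/-- The `θ`-closure `A^{+θ}` of `A`. -/
noncomputable def clos (R : CellSpace G M) (S : Set G) (A : Set M) (θ : ℕ) : Set M :=
  {m : M | (R.ball S m θ ∩ A).Nonempty}

/-- The external `θ`-boundary `∂θ⁺A = A^{+θ} ∖ A`. -/
noncomputable def extB (R : CellSpace G M) (S : Set G) (A : Set M) (θ : ℕ) : Set M :=
  R.clos S A θ \ A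

/-- The internal `θ`-boundary `∂θ⁻A = A ∖ A^{-θ}`. -/
noncomputable def intB (R : CellSpace G M) (S : Set G) (A : Set M) (θ : ℕ) : Set M :=
  A \ R.inter S A θ

/-- The `θ`-boundary `∂θA = A^{+θ} ∖ A^{-θ}`. -/
noncomputable def bdry (R : CellSpace G M) (S : Set G) (A : Set M) (θ : ℕ) : Set M :=
  R.clos S A θ \ R.inter S A θ

end CellSpace

/-- The set `X_A` of restrictions to `A` of the elements of `X`. -/
def restr (A : Set M) (X : Set (M → Q)) : Set (A → Q) :=
  (fun x : M → Q => A.restrict x) '' X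

/-- The pattern `p` (with domain `A`) semi-occurs in the configuration `c`:
there is `h ∈ H` with `h ⊛ p = c↾_{h ▷ dom p}`. -/
def SemiOccurs (R : CellSpace G M) (H : Subgroup G) {A : Set M} (p : A → Q)
    (c : M → Q) : Prop :=
  ∃ h ∈ H, ∀ a : A, c (R.act h ↑a) = p a

/-- The pattern `p` (with domain `A`) occurs at `t` in the configuration `c`:
`t ⊛' p = c↾_{t ↝ A}`. -/
def OccursAt (R : CellSpace G M) {A : Set M} (p : A → Q) (t : M) (c : M → Q) : Prop :=
  ∀ a : A, c (R.nAct t ↑a) = p a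

/-- The pattern `p` is allowed in `X`: it semi-occurs in some point of `X`. -/
def Allowed (R : CellSpace G M) (H : Subgroup G) (X : Set (M → Q)) {A : Set M}
    (p : A → Q) : Prop :=
  ∃ x ∈ X, SemiOccurs R H p x

/-- The set `⟨𝔉⟩` generated by a set `𝔉` of forbidden patterns. -/
def Generated (R : CellSpace G M) (H : Subgroup G) (𝔉 : Set (Σ A : Set M, A → Q)) :
    Set (M → Q) :=
  {c : M → Q | ∀ f ∈ 𝔉, ¬ SemiOccurs R H f.2 c}

/-- `X` is a subshift of `Q^M`: it is generated by a set of blocks. -/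
def IsSubshift (R : CellSpace G M) (H : Subgroup G) (X : Set (M → Q)) : Prop :=
  ∃ 𝔉 : Set (Σ A : Set M, A → Q), (∀ f ∈ 𝔉, f.1.Finite) ∧ X = Generated R H 𝔉

/-- `X` is a subshift of finite type: it is generated by a finite set of blocks. -/
def IsSubshiftFT (R : CellSpace G M) (H : Subgroup G) (X : Set (M → Q)) : Prop :=
  ∃ 𝔉 : Set (Σ A : Set M, A → Q), 𝔉.Finite ∧ (∀ f ∈ 𝔉, f.1.Finite) ∧
    X = Generated R H 𝔉

/-- `X` is a `κ`-step subshift: it is generated by a set of `B(κ)`-blocks. -/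
def IsStep (R : CellSpace G M) (S : Set G) (H : Subgroup G) (X : Set (M → Q))
    (κ : ℕ) : Prop :=
  ∃ 𝔉 : Set (Σ A : Set M, A → Q), (∀ f ∈ 𝔉, f.1 = R.ball S R.m0 κ) ∧
    X = Generated R H 𝔉

/-- `X` is `κ`-strongly irreducible. -/
def IsStronglyIrr (R : CellSpace G M) (S : Set G) (H : Subgroup G)
    (X : Set (M → Q)) (κ : ℕ) : Prop :=
  ∀ (A B : Set M), A.Finite → B.Finite → ∀ (p : A → Q) (p' : B → Q),
    Allowed R H X p → Allowed R H X p' →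
    (∀ a ∈ A, ∀ b ∈ B, κ + 1 ≤ R.dist S a b) →
    ∃ x ∈ X, A.restrict x = p ∧ B.restrict x = p'

/-- `X` has `ρ`-bounded propagation. -/
def HasBoundedProp (R : CellSpace G M) (S : Set G) (X : Set (M → Q)) (ρ : ℕ) : Prop :=
  ∀ F : Set M, F.Finite → ∀ p : F → Q,
    (∀ f ∈ F, ∃ x ∈ X, ∀ (m : M) (hm : m ∈ R.ball S f ρ ∩ F), p ⟨m, hm.2⟩ = x m) →
    ∃ x ∈ X, F.restrict x = p

/-- `Δ` is a `κ`-local map from `X` to `Y`. -/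
def IsLocalMap (R : CellSpace G M) (S : Set G) (H : Subgroup G)
    (X Y : Set (M → Q)) (Δ : (M → Q) → (M → Q)) (κ : ℕ) : Prop :=
  Set.MapsTo Δ X Y ∧
  ∃ N : Set M, N ⊆ R.ball S R.m0 κ ∧
    (∀ g₀ : G, R.stab g₀ → ∀ n ∈ N, R.act g₀ n ∈ N) ∧
    ∃ δ : (N → Q) → Q,
      (∀ h₀ ∈ H, R.stab h₀ →
        ∀ ℓ ∈ restr N X, ∀ ℓ' : N → Q,
          (∀ (n : M) (hn : n ∈ N) (hn' : R.act h₀⁻¹ n ∈ N),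
            ℓ' ⟨n, hn⟩ = ℓ ⟨R.act h₀⁻¹ n, hn'⟩) →
          δ ℓ' = δ ℓ) ∧
      ∀ x ∈ X, ∀ m : M, Δ x m = δ (fun n : N => x (R.nAct m ↑n))

/-- `Δ` is pre-injective on `X`. -/
def PreInjective (X : Set (M → Q)) (Δ : (M → Q) → (M → Q)) : Prop :=
  ∀ x ∈ X, ∀ x' ∈ X, Δ x = Δ x' → {m : M | x m ≠ x' m}.Finite → x = x'

/-- The cell space `R` is right amenable: there is a finitely additive probability
measure on the power set of `M` that is semi-invariant under the right semi-action. -/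
def RightAmenable (R : CellSpace G M) : Prop :=
  ∃ μ : Set M → ℝ, (∀ A : Set M, 0 ≤ μ A) ∧ μ Set.univ = 1 ∧
    (∀ A B : Set M, Disjoint A B → μ (A ∪ B) = μ A + μ B) ∧
    ∀ (g : G) (A : Set M), Set.InjOn (fun m => R.sAct m g) A →
      μ ((fun m => R.sAct m g) '' A) = μ A

/-- `F` is a right Følner net in `R` (indexed by the directed set `I`). -/
def IsFolnerNet (R : CellSpace G M) (S : Set G) {I : Type*} [Preorder I]
    (F : I → Set M) : Prop :=
  (∀ i, (F i).Nonempty) ∧ (∀ i, (F i).Finite) ∧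
  ∀ ρ : ℕ, Tendsto (fun i => ((R.bdry S (F i) ρ).ncard : ℝ) / ((F i).ncard : ℝ))
    atTop (nhds 0)

/-- The entropy of `X ⊆ Q^M` with respect to the net `F`:
`limsup_i log|X_{F_i}| / |F_i|`. -/
noncomputable def entropy (R : CellSpace G M) (S : Set G) {I : Type*} [Preorder I]
    (F : I → Set M) (X : Set (M → Q)) : ℝ :=
  limsup (fun i => Real.log ((restr (F i) X).ncard : ℝ) / ((F i).ncard : ℝ)) atTop

/-- `T` is a `⟨θ, κ, θ'⟩`-tiling of `R`. -/
def IsTiling (R : CellSpace G M) (S : Set G) (θ κ θ' : ℕ) (T : Set M) : Prop :=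
  (∀ t ∈ T, ∀ t' ∈ T, t ≠ t' →
    ∀ a ∈ R.ball S t θ, ∀ b ∈ R.ball S t' θ, κ + 1 ≤ R.dist S a b) ∧
  ∀ m : M, ∃ t ∈ T, m ∈ R.ball S t θ'

/-- The action `h ⊛ c` of `h ∈ G` on configurations: `(h ⊛ c)(m) = c(h⁻¹ ▷ m)`. -/
def shiftAct (R : CellSpace G M) (h : G) (c : M → Q) : M → Q :=
  fun m => c (R.act h⁻¹ m)

namespace CellSpace

variable {R : CellSpace G M} {S : Set G}

lemma act_inv_coord (m : M) : R.act (R.coord m)⁻¹ m = R.m0 := by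
  have h := congrArg (R.act (R.coord m)⁻¹) (R.coord_act m)
  rwa [← R.mul_act, inv_mul_cancel, R.one_act, eq_comm] at h

lemma act_coord_mul_inv_coord (m t : M) : R.act (R.coord m * (R.coord t)⁻¹) t = m := by
  rw [R.mul_act, act_inv_coord, R.coord_act]

lemma sAct_one (m : M) : R.sAct m 1 = m := by
  rw [sAct, mul_one, R.coord_act]

lemma exists_sAct_sAct_eq (hS : R.IsRightGenSet S) (m : M) {s : G} (hs : s ∈ S) :
    ∃ s' ∈ S, R.sAct (R.sAct m s) s' = m := by
  set n := R.sAct m s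
  have hstab : R.stab ((R.coord n)⁻¹ * (R.coord m * s)) := by
    rw [stab, R.mul_act]
    exact act_inv_coord n
  refine ⟨_, hS.stab_mul _ hstab _ (hS.symm s hs), ?_⟩
  rw [sAct, show R.coord n * ((R.coord n)⁻¹ * (R.coord m * s) * s⁻¹) = R.coord m by group,
    R.coord_act]

lemma chain_zero_iff {m m' : M} : R.Chain S m m' 0 ↔ m = m' :=
  ⟨fun ⟨_, h₀, h₁, _⟩ => h₀.symm.trans h₁,
    fun h => ⟨fun _ => m, rfl, h, fun i hi => absurd hi (Nat.not_lt_zero i)⟩⟩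

lemma Chain.snoc {m x : M} {n : ℕ} (h : R.Chain S m x n) {s : G} (hs : s ∈ S) :
    R.Chain S m (R.sAct x s) (n + 1) := by
  obtain ⟨f, h₀, hn, hf⟩ := h
  refine ⟨Function.update f (n + 1) (R.sAct x s), by simp [h₀], by simp, fun i hi => ?_⟩
  rcases (Nat.lt_succ_iff.mp hi).lt_or_eq with hi | rfl
  · obtain ⟨s', hs', e⟩ := hf i hi
    exact ⟨s', hs', by rw [Function.update_of_ne (by omega), Function.update_of_ne (by omega), e]⟩
  · exact ⟨s, hs, by simp [hn]⟩

lemma Chain.exists_last {m m' : M} {n : ℕ} (h : R.Chain S m m' (n + 1)) :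
    ∃ x, R.Chain S m x n ∧ ∃ s ∈ S, m' = R.sAct x s := by
  obtain ⟨f, h₀, hn, hf⟩ := h
  obtain ⟨s, hs, e⟩ := hf n n.lt_succ_self
  exact ⟨f n, ⟨f, h₀, rfl, fun i hi => hf i (by omega)⟩, s, hs, hn ▸ e⟩

lemma Chain.trans {m m' m'' : M} {p q : ℕ} (h₁ : R.Chain S m m' p) (h₂ : R.Chain S m' m'' q) :
    R.Chain S m m'' (p + q) := by
  induction q generalizing m'' with
  | zero => rwa [← chain_zero_iff.mp h₂]
  | succ q ih =>
    obtain ⟨x, hx, s, hs, rfl⟩ := h₂.exists_last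
    exact (ih hx).snoc hs

lemma Chain.symm (hS : R.IsRightGenSet S) {m m' : M} {n : ℕ} (h : R.Chain S m m' n) :
    R.Chain S m' m n := by
  induction n generalizing m' with
  | zero => exact chain_zero_iff.mpr (chain_zero_iff.mp h).symm
  | succ n ih =>
    obtain ⟨x, hx, s, hs, rfl⟩ := h.exists_last
    obtain ⟨s', hs', hback⟩ := exists_sAct_sAct_eq hS x hs
    have hstep : R.Chain S (R.sAct x s) x 1 := by
      simpa only [hback] using
        (chain_zero_iff.mpr rfl : R.Chain S (R.sAct x s) (R.sAct x s) 0).snoc hs'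
    simpa only [Nat.add_comm] using hstep.trans (ih hx)

lemma exists_chain (hS : R.IsRightGenSet S) (m m' : M) : ∃ n, R.Chain S m m' n := by
  obtain ⟨k, hk⟩ := hS.generates m
  obtain ⟨k', hk'⟩ := hS.generates m'
  exact ⟨k + k', Chain.trans (Chain.symm hS (m := R.m0) hk) hk'⟩

lemma dist_le_of_chain {m m' : M} {n : ℕ} (h : R.Chain S m m' n) : R.dist S m m' ≤ n :=
  Nat.sInf_le h

lemma chain_dist (hS : R.IsRightGenSet S) (m m' : M) : R.Chain S m m' (R.dist S m m') :=
  Nat.sInf_mem (exists_chain hS m m')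

lemma dist_self (m : M) : R.dist S m m = 0 :=
  Nat.le_zero.mp (dist_le_of_chain (chain_zero_iff.mpr rfl))

lemma dist_triangle (hS : R.IsRightGenSet S) (m m' m'' : M) :
    R.dist S m m'' ≤ R.dist S m m' + R.dist S m' m'' :=
  dist_le_of_chain ((chain_dist hS m m').trans (chain_dist hS m' m''))

lemma dist_comm (hS : R.IsRightGenSet S) (m m' : M) : R.dist S m m' = R.dist S m' m :=
  le_antisymm (dist_le_of_chain ((chain_dist hS m' m).symm hS))
    (dist_le_of_chain ((chain_dist hS m m').symm hS))

lemma mem_ball_self (m : M) (ρ : ℕ) : m ∈ R.ball S m ρ := by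
  simp [ball, dist_self]

lemma ball_zero (hS : R.IsRightGenSet S) (m : M) : R.ball S m 0 = {m} := by
  refine Set.eq_singleton_iff_unique_mem.mpr ⟨mem_ball_self m 0, fun m' hm' => ?_⟩
  have h := chain_dist hS m m'
  rw [Nat.le_zero.mp hm'] at h
  exact (chain_zero_iff.mp h).symm

lemma ball_succ_subset (hS : R.IsRightGenSet S) (m : M) (ρ : ℕ) :
    R.ball S m (ρ + 1) ⊆ (fun p : M × G => R.sAct p.1 p.2) '' (R.ball S m ρ ×ˢ insert 1 S) := by
  intro m' hm'
  rcases Nat.eq_zero_or_pos (R.dist S m m') with h | h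
  · refine ⟨(m, 1), ⟨mem_ball_self m ρ, mem_insert 1 S⟩, ?_⟩
    have hc := chain_dist hS m m'
    rw [h] at hc
    simpa [sAct_one] using chain_zero_iff.mp hc
  · have hc := chain_dist hS m m'
    rw [← Nat.sub_add_cancel h] at hc
    obtain ⟨x, hx, s, hs, he⟩ := hc.exists_last
    refine ⟨(x, s), ⟨(dist_le_of_chain hx).trans ?_, mem_insert_of_mem 1 hs⟩, he.symm⟩
    have : R.dist S m m' ≤ ρ + 1 := hm'
    omega

lemma ball_finite (hS : R.IsRightGenSet S) (m : M) : ∀ ρ, (R.ball S m ρ).Finite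
  | 0 => by rw [ball_zero hS]; exact finite_singleton m
  | ρ + 1 =>
    (((ball_finite hS m ρ).prod (hS.finite.insert 1)).image _).subset (ball_succ_subset hS m ρ)

lemma ncard_ball_le (hS : R.IsRightGenSet S) (m : M) : ∀ ρ, (R.ball S m ρ).ncard ≤ (S.ncard + 1) ^ ρ
  | 0 => by simp [ball_zero hS]
  | ρ + 1 => by
    have hfin := (ball_finite hS m ρ).prod (hS.finite.insert 1)
    calc (R.ball S m (ρ + 1)).ncard
        ≤ ((fun p : M × G => R.sAct p.1 p.2) '' (R.ball S m ρ ×ˢ insert 1 S)).ncard :=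
          ncard_le_ncard (ball_succ_subset hS m ρ) (hfin.image _)
      _ ≤ (R.ball S m ρ).ncard * (insert 1 S).ncard := ncard_prod ▸ ncard_image_le hfin
      _ ≤ (S.ncard + 1) ^ ρ * (S.ncard + 1) :=
          Nat.mul_le_mul (ncard_ball_le hS m ρ) (ncard_insert_le 1 S)
      _ = (S.ncard + 1) ^ (ρ + 1) := (pow_succ _ _).symm

lemma clos_finite (hS : R.IsRightGenSet S) {A : Set M} (hA : A.Finite) (ρ : ℕ) :
    (R.clos S A ρ).Finite := by
  refine (hA.biUnion fun a _ => ball_finite hS a ρ).subset ?_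
  rintro m ⟨a, ham, ha⟩
  exact mem_biUnion ha (show R.dist S a m ≤ ρ from dist_comm hS a m ▸ ham)

lemma clos_ball_subset (hS : R.IsRightGenSet S) (m : M) (θ κ : ℕ) :
    R.clos S (R.ball S m θ) κ ⊆ R.ball S m (θ + κ) := by
  rintro m' ⟨b, hb, hmb⟩
  calc R.dist S m m' ≤ R.dist S m b + R.dist S b m' := dist_triangle hS m b m'
    _ ≤ θ + κ := Nat.add_le_add hmb (dist_comm hS b m' ▸ hb)

end CellSpace

lemma ncard_le_mul_ncard_of_mapsTo {α β : Type*} {s : Set α} {t : Set β} {f : α → β}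
    (hs : s.Finite) (ht : t.Finite) (hf : MapsTo f s t) {n : ℕ}
    (hn : ∀ b ∈ t, {a ∈ s | f a = b}.ncard ≤ n) : s.ncard ≤ n * t.ncard := by
  classical
  lift s to Finset α using hs
  lift t to Finset β using ht
  simp only [ncard_coe_finset]
  refine Finset.card_le_mul_card_image_of_maps_to hf n fun b hb => ?_
  simpa [← Finset.coe_filter] using hn b hb

lemma succ_mul_ncard_le_of_escape {α β : Type*} {U V : Set α} (π : α → β) {n : ℕ}
    (hU : U.Finite) (hVU : V ⊆ U) (hfib : ∀ b, {u ∈ U | π u = b}.ncard ≤ n)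
    (hesc : ∀ v ∈ V, ∃ u ∈ U \ V, π u = π v) : (n + 1) * V.ncard ≤ n * U.ncard := by
  choose! e heU heπ using hesc
  have hV : V.ncard ≤ n * (U \ V).ncard := by
    refine ncard_le_mul_ncard_of_mapsTo (hU.subset hVU) hU.sdiff heU fun u _ => ?_
    refine (ncard_le_ncard (t := {w ∈ U | π w = π u}) (fun v hv => ⟨hVU hv.1, ?_⟩)
      (hU.subset fun _ h => h.1)).trans (hfib (π u))
    rw [← hv.2, heπ v hv.1]
  calc (n + 1) * V.ncard = n * V.ncard + V.ncard := by ring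
    _ ≤ n * V.ncard + n * (U \ V).ncard := Nat.add_le_add_left hV _
    _ = n * U.ncard := by rw [← ncard_sdiff_add_ncard_of_subset hVU hU]; ring

lemma ncard_fiber_restrict_le [Finite Q] {Ω A : Set M} [Finite Ω] (hAΩ : A ⊆ Ω) (w : A → Q) :
    {u : Ω → Q | (fun a => u (inclusion hAΩ a)) = w}.ncard ≤ Nat.card Q ^ (Ω \ A).ncard := by
  calc _ ≤ (univ : Set ((Ω \ A : Set M) → Q)).ncard := by
        refine ncard_le_ncard_of_injOn (fun u b => u (inclusion sdiff_subset b))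
          (fun _ _ => mem_univ _) fun u hu u' hu' h => funext fun ω => ?_
        by_cases hω : ω.1 ∈ A
        · exact congrFun (hu.trans hu'.symm) ⟨ω, hω⟩
        · exact congrFun h ⟨ω, ω.2, hω⟩
    _ = Nat.card Q ^ (Ω \ A).ncard := by rw [ncard_univ, Nat.card_fun, Nat.card_coe_set_eq]

lemma log_add_mul_log_div_le {a b c k : ℕ} (ha : 0 < a) (hc : 0 < c)
    (h : (c + 1) ^ k * a ≤ c ^ k * b) :
    Real.log a + k * Real.log ((c + 1) / c) ≤ Real.log b := by
  have hb : 0 < b := Nat.pos_of_mul_pos_left ((by positivity : 0 < (c + 1) ^ k * a).trans_le h)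
  have h' : ((c : ℝ) + 1) ^ k * a ≤ (c : ℝ) ^ k * b := by exact_mod_cast h
  have hlog := Real.log_le_log (by positivity) h'
  rw [Real.log_mul (by positivity) (by positivity), Real.log_mul (by positivity) (by positivity),
    Real.log_pow, Real.log_pow] at hlog
  rw [Real.log_div (by positivity) (by positivity)]
  linarith

lemma limsup_lt_limsup_of_eventually_add_le {ι : Type*} {l : Filter ι} [l.NeBot] {f g : ι → ℝ}
    {ε : ℝ} (hε : 0 < ε) (hf : IsBoundedUnder (· ≥ ·) l f) (hg : IsBoundedUnder (· ≤ ·) l g)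
    (h : ∀ᶠ i in l, f i + ε ≤ g i) : limsup f l < limsup g l := by
  have hlt := eventually_lt_of_limsup_lt (lt_add_of_pos_right (limsup g l) (half_pos hε)) hg
  have hle : limsup f l ≤ limsup g l - ε / 2 :=
    limsup_le_of_le hf.isCoboundedUnder_le (by filter_upwards [h, hlt] with i h₁ h₂; linarith)
  linarith

lemma log_ncard_restr_div_le [Finite Q] {Ω : Set M} (hΩ : Ω.Finite)
    (X : Set (M → Q)) : Real.log (restr Ω X).ncard / Ω.ncard ≤ Real.log (Nat.card Q) := by
  have := hΩ.to_subtype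
  have hq : 0 ≤ Real.log (Nat.card Q) := Real.log_natCast_nonneg _
  rcases Nat.eq_zero_or_pos (restr Ω X).ncard with h | h
  · simpa [h] using hq
  rcases Ω.eq_empty_or_nonempty with rfl | hne
  · simpa using hq
  rw [div_le_iff₀' (by exact_mod_cast (ncard_pos hΩ).mpr hne)]
  calc Real.log (restr Ω X).ncard ≤ Real.log ((Nat.card Q : ℝ) ^ Ω.ncard) := by
        refine Real.log_le_log (by exact_mod_cast h) ?_
        have : (restr Ω X).ncard ≤ Nat.card (Ω → Q) := ncard_le_card _
        rw [Nat.card_fun, Nat.card_coe_set_eq] at this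
        exact_mod_cast this
    _ = Ω.ncard * Real.log (Nat.card Q) := Real.log_pow _ _

section

variable {R : CellSpace G M} {S : Set G} {H : Subgroup G} {X Y : Set (M → Q)}
  {κ θ θ' : ℕ} {T : Set M}

def tilesIn (R : CellSpace G M) (S : Set G) (T : Set M) (θ : ℕ) (Ω : Set M) : Set M :=
  {t ∈ T | R.ball S t θ ⊆ Ω}

lemma tilesIn_finite {Ω : Set M} (hΩ : Ω.Finite) : (tilesIn R S T θ Ω).Finite :=
  hΩ.subset fun _ ht => ht.2 (CellSpace.mem_ball_self _ θ)

lemma ncard_le_mul_ncard_tilesIn_add (hS : R.IsRightGenSet S) (hT : IsTiling R S θ κ θ' T)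
    {β : ℕ} (hβ : ∀ t ∈ T, (R.ball S t θ').ncard ≤ β) {Ω : Set M} (hΩ : Ω.Finite) :
    Ω.ncard ≤ β * (tilesIn R S T θ Ω).ncard + (R.bdry S Ω (θ + θ')).ncard := by
  choose τ hτT hτ using hT.2
  set I := R.inter S Ω (θ + θ')
  have hτI : MapsTo τ I (tilesIn R S T θ Ω) := fun m hm => ⟨hτT m, fun b hb => hm.2 <|
    calc R.dist S m b ≤ R.dist S m (τ m) + R.dist S (τ m) b := R.dist_triangle hS _ _ _
      _ ≤ θ + θ' := by
        rw [R.dist_comm hS m, add_comm θ]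
        exact Nat.add_le_add (hτ m) hb⟩
  have hI : I.ncard ≤ β * (tilesIn R S T θ Ω).ncard := by
    refine ncard_le_mul_ncard_of_mapsTo (hΩ.subset fun _ hm => hm.1) (tilesIn_finite hΩ) hτI
      fun t ht => (ncard_le_ncard ?_ (R.ball_finite hS t θ')).trans (hβ t ht.1)
    rintro m ⟨-, rfl⟩
    exact hτ m
  have hΩI : Ω ⊆ I ∪ R.bdry S Ω (θ + θ') := fun m hm => by
    by_cases h : m ∈ I
    · exact .inl h
    · exact .inr ⟨⟨m, R.mem_ball_self m _, hm⟩, h⟩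
  calc Ω.ncard ≤ (I ∪ R.bdry S Ω (θ + θ')).ncard :=
        ncard_le_ncard hΩI ((hΩ.subset fun _ hm => hm.1).union
          ((R.clos_finite hS hΩ _).subset sdiff_subset))
    _ ≤ I.ncard + (R.bdry S Ω (θ + θ')).ncard := ncard_union_le _ _
    _ ≤ _ := Nat.add_le_add_right hI _

lemma allowed_domRestrict {x : M → Q} (hx : x ∈ X) (A : Set M) :
    Allowed R H X (A.domRestrict x) :=
  ⟨x, hx, 1, H.one_mem, fun a => by rw [R.one_act]; rfl⟩

def constrainedOn (R : CellSpace G M) (S : Set G) (X Y : Set (M → Q)) (θ : ℕ) (𝒯 : Set M) :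
    Set (M → Q) :=
  {x ∈ X | ∀ t ∈ 𝒯, (R.ball S t θ).domRestrict x ∈ restr (R.ball S t θ) Y}

lemma constrainedOn_empty : constrainedOn R S X Y θ ∅ = X := by
  simp [constrainedOn]

lemma constrainedOn_anti {𝒯 𝒯' : Set M} (h : 𝒯 ⊆ 𝒯') :
    constrainedOn R S X Y θ 𝒯' ⊆ constrainedOn R S X Y θ 𝒯 :=
  fun _ hx => ⟨hx.1, fun t ht => hx.2 t (h ht)⟩

lemma subset_constrainedOn (hYX : Y ⊆ X) (𝒯 : Set M) : Y ⊆ constrainedOn R S X Y θ 𝒯 :=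
  fun y hy => ⟨hYX hy, fun _ _ => ⟨y, hy, rfl⟩⟩

lemma exists_mem_constrainedOn_eqOn (hS : R.IsRightGenSet S) (hsi : IsStronglyIrr R S H X κ)
    (hT : IsTiling R S θ κ θ' T) {Ω : Set M} (hΩ : Ω.Finite) {t : M} (ht : t ∈ T) {𝒯 : Set M}
    (h𝒯 : 𝒯 ⊆ tilesIn R S T θ Ω) (ht𝒯 : t ∉ 𝒯) {p : R.ball S t θ → Q}
    (hp : p ∈ restr (R.ball S t θ) X) {x : M → Q} (hx : x ∈ constrainedOn R S X Y θ 𝒯) :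
    ∃ x' ∈ constrainedOn R S X Y θ 𝒯,
      EqOn x' x (Ω \ R.clos S (R.ball S t θ) κ) ∧ (R.ball S t θ).domRestrict x' = p := by
  set A := Ω \ R.clos S (R.ball S t θ) κ
  obtain ⟨z, hz, rfl⟩ := hp
  have hfar : ∀ a ∈ A, ∀ b ∈ R.ball S t θ, κ + 1 ≤ R.dist S a b := fun a ha b hb => by
    by_contra h
    exact ha.2 ⟨b, show R.dist S a b ≤ κ by omega, hb⟩
  obtain ⟨x', hx', hA, hB⟩ := hsi A _ (hΩ.subset sdiff_subset) (R.ball_finite hS t θ) _ _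
    (allowed_domRestrict hx.1 A) (allowed_domRestrict hz _) hfar
  have hball : ∀ t' ∈ 𝒯, R.ball S t' θ ⊆ A := fun t' ht' b hb => by
    refine ⟨(h𝒯 ht').2 hb, fun ⟨b₂, hbb₂, hb₂⟩ => ?_⟩
    have := hT.1 t' (h𝒯 ht').1 t ht (fun h => ht𝒯 (h ▸ ht')) b hb b₂ hb₂
    have : R.dist S b b₂ ≤ κ := hbb₂
    omega
  refine ⟨x', ⟨hx', fun t' ht' => ?_⟩, fun m hm => congrFun hA ⟨m, hm⟩, hB⟩
  convert hx.2 t' ht' using 1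
  exact funext fun b => congrFun hA ⟨b, hball t' ht' b.2⟩

lemma succ_mul_ncard_restr_constrainedOn_insert_le [Finite Q] (hS : R.IsRightGenSet S)
    (hsi : IsStronglyIrr R S H X κ) (hT : IsTiling R S θ κ θ' T) {C : ℕ} {Ω : Set M}
    (hΩ : Ω.Finite) {t : M} (ht : t ∈ tilesIn R S T θ Ω)
    (hC : Nat.card Q ^ (R.ball S t (θ + κ)).ncard ≤ C)
    (hY : restr (R.ball S t θ) Y ⊂ restr (R.ball S t θ) X) {𝒯 : Set M}
    (h𝒯 : 𝒯 ⊆ tilesIn R S T θ Ω) (ht𝒯 : t ∉ 𝒯) :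
    (C + 1) * (restr Ω (constrainedOn R S X Y θ (insert t 𝒯))).ncard ≤
      C * (restr Ω (constrainedOn R S X Y θ 𝒯)).ncard := by
  have := hΩ.to_subtype
  set B := R.ball S t θ
  set A := Ω \ R.clos S B κ
  have hAΩ : A ⊆ Ω := sdiff_subset
  obtain ⟨p, hpX, hpY⟩ := exists_of_ssubset hY
  have : Nonempty Q := let ⟨z, _⟩ := hpX; ⟨z R.m0⟩
  refine succ_mul_ncard_le_of_escape (fun u : Ω → Q => fun a : A => u (inclusion hAΩ a))
    (toFinite _) (image_mono (constrainedOn_anti (subset_insert t 𝒯))) (fun w => ?_) ?_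
  · calc _ ≤ _ := ncard_le_ncard (fun u hu => hu.2) (toFinite _)
      _ ≤ Nat.card Q ^ (Ω \ A).ncard := ncard_fiber_restrict_le hAΩ w
      _ ≤ Nat.card Q ^ (R.ball S t (θ + κ)).ncard := by
        refine Nat.pow_le_pow_right Nat.card_pos (ncard_le_ncard ?_ (R.ball_finite hS t _))
        exact fun m hm => R.clos_ball_subset hS t θ κ (by_contra fun h => hm.2 ⟨hm.1, h⟩)
      _ ≤ C := hC
  · rintro _ ⟨x, hx, rfl⟩
    obtain ⟨x', hx', hA, hB⟩ := exists_mem_constrainedOn_eqOn hS hsi hT hΩ ht.1 h𝒯 ht𝒯 hpX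
      (constrainedOn_anti (subset_insert t 𝒯) hx)
    refine ⟨Ω.domRestrict x', ⟨⟨x', hx', rfl⟩, ?_⟩, funext fun a => hA a.2⟩
    rintro ⟨y, hy, hyx'⟩
    refine hpY (hB ▸ ?_)
    convert hy.2 t (mem_insert t 𝒯) using 1
    exact funext fun b => (congrFun hyx' ⟨b, ht.2 b.2⟩).symm

lemma pow_mul_ncard_restr_le [Finite Q] (hS : R.IsRightGenSet S) (hsi : IsStronglyIrr R S H X κ)
    (hT : IsTiling R S θ κ θ' T) (hYX : Y ⊆ X)
    (hprop : ∀ t ∈ T, restr (R.ball S t θ) Y ⊂ restr (R.ball S t θ) X) {C : ℕ}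
    (hC : ∀ t ∈ T, Nat.card Q ^ (R.ball S t (θ + κ)).ncard ≤ C) {Ω : Set M} (hΩ : Ω.Finite) :
    (C + 1) ^ (tilesIn R S T θ Ω).ncard * (restr Ω Y).ncard ≤
      C ^ (tilesIn R S T θ Ω).ncard * (restr Ω X).ncard := by
  have := hΩ.to_subtype
  have hYZ : (restr Ω Y).ncard ≤
      (restr Ω (constrainedOn R S X Y θ (tilesIn R S T θ Ω))).ncard :=
    ncard_le_ncard (image_mono (subset_constrainedOn hYX _)) (toFinite _)
  refine (Nat.mul_le_mul_left _ hYZ).trans ?_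
  refine (tilesIn_finite hΩ).induction_on_subset _
    (by simp only [constrainedOn_empty, ncard_empty, pow_zero, le_refl]) ?_
  intro t 𝒯 ht h𝒯 ht𝒯 ih
  rw [ncard_insert_of_notMem ht𝒯 ((tilesIn_finite hΩ).subset h𝒯)]
  calc (C + 1) ^ (𝒯.ncard + 1) * (restr Ω (constrainedOn R S X Y θ (insert t 𝒯))).ncard
      = (C + 1) ^ 𝒯.ncard * ((C + 1) * (restr Ω (constrainedOn R S X Y θ (insert t 𝒯))).ncard) := by
        ring
    _ ≤ (C + 1) ^ 𝒯.ncard * (C * (restr Ω (constrainedOn R S X Y θ 𝒯)).ncard) :=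
        Nat.mul_le_mul_left _ (succ_mul_ncard_restr_constrainedOn_insert_le hS hsi hT hΩ ht
          (hC t ht.1) (hprop t ht.1) h𝒯 ht𝒯)
    _ = C * ((C + 1) ^ 𝒯.ncard * (restr Ω (constrainedOn R S X Y θ 𝒯)).ncard) := by ring
    _ ≤ C * (C ^ 𝒯.ncard * (restr Ω X).ncard) := Nat.mul_le_mul_left _ ih
    _ = C ^ (𝒯.ncard + 1) * (restr Ω X).ncard := by ring

lemma log_ncard_restr_div_add_le [Finite Q] (hS : R.IsRightGenSet S)
    (hsi : IsStronglyIrr R S H X κ) (hT : IsTiling R S θ κ θ' T) (hYX : Y ⊆ X)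
    (hprop : ∀ t ∈ T, restr (R.ball S t θ) Y ⊂ restr (R.ball S t θ) X) {C β : ℕ} (hC₀ : 0 < C)
    (hC : ∀ t ∈ T, Nat.card Q ^ (R.ball S t (θ + κ)).ncard ≤ C) (hβ₀ : 0 < β)
    (hβ : ∀ t ∈ T, (R.ball S t θ').ncard ≤ β) {Ω : Set M} (hΩ : Ω.Finite) (hΩne : Ω.Nonempty)
    (hY : Y.Nonempty) :
    Real.log (restr Ω Y).ncard / Ω.ncard +
        Real.log ((C + 1) / C) / β * (1 - (R.bdry S Ω (θ + θ')).ncard / Ω.ncard) ≤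
      Real.log (restr Ω X).ncard / Ω.ncard := by
  have := hΩ.to_subtype
  set k := (tilesIn R S T θ Ω).ncard
  set γ := Real.log ((C + 1) / C)
  obtain ⟨y, hy⟩ := hY
  have hcount : Real.log (restr Ω Y).ncard + k * γ ≤ Real.log (restr Ω X).ncard := by
    refine log_add_mul_log_div_le ?_ hC₀ (pow_mul_ncard_restr_le hS hsi hT hYX hprop hC hΩ)
    exact (ncard_pos (toFinite _)).mpr ⟨_, y, hy, rfl⟩
  have htiles : (Ω.ncard : ℝ) ≤ β * k + (R.bdry S Ω (θ + θ')).ncard := by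
    exact_mod_cast ncard_le_mul_ncard_tilesIn_add hS hT hβ hΩ
  have hn : (0 : ℝ) < Ω.ncard := by exact_mod_cast (ncard_pos hΩ).mpr hΩne
  have hγ : 0 ≤ γ := Real.log_nonneg (by rw [le_div_iff₀ (by positivity)]; linarith)
  have hgap : γ / β * (Ω.ncard - (R.bdry S Ω (θ + θ')).ncard) ≤ k * γ := by
    rw [div_mul_eq_mul_div, div_le_iff₀ (by positivity)]
    nlinarith
  calc _ = (Real.log (restr Ω Y).ncard + γ / β * (Ω.ncard - (R.bdry S Ω (θ + θ')).ncard)) /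
        Ω.ncard := by field_simp
    _ ≤ _ := by gcongr; linarith

lemma entropy_lt_of_nonempty {I : Type*} [Nonempty I] [SemilatticeSup I] [Finite Q]
    (hS : R.IsRightGenSet S) {F : I → Set M} (hF : IsFolnerNet R S F)
    (hsi : IsStronglyIrr R S H X κ) (hYX : Y ⊆ X) (hY : Y.Nonempty) (hT : IsTiling R S θ κ θ' T)
    (hprop : ∀ t ∈ T, restr (R.ball S t θ) Y ⊂ restr (R.ball S t θ) X) :
    entropy R S F Y < entropy R S F X := by
  have : Nonempty Q := let ⟨y, _⟩ := hY; ⟨y R.m0⟩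
  set C := Nat.card Q ^ (S.ncard + 1) ^ (θ + κ)
  set β := (S.ncard + 1) ^ θ'
  have hC : 0 < C := pow_pos Nat.card_pos _
  have hγ : 0 < Real.log ((C + 1) / C) / β :=
    div_pos (Real.log_pos (by rw [one_lt_div (by positivity)]; linarith)) (by positivity)
  refine limsup_lt_limsup_of_eventually_add_le (half_pos hγ)
    (isBoundedUnder_of ⟨0, fun i => div_nonneg (Real.log_natCast_nonneg _) (Nat.cast_nonneg _)⟩)
    (isBoundedUnder_of ⟨_, fun i => log_ncard_restr_div_le (hF.2.1 i) X⟩) ?_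
  filter_upwards [(hF.2.2 (θ + θ')).eventually_lt_const (by norm_num : (0 : ℝ) < 1 / 2)]
    with i hi
  have := log_ncard_restr_div_add_le hS hsi hT hYX hprop hC
    (fun t _ => Nat.pow_le_pow_right Nat.card_pos (R.ncard_ball_le hS t _)) (by positivity)
    (fun t _ => R.ncard_ball_le hS t θ') (hF.2.1 i) (hF.1 i) hY
  nlinarith

lemma exists_mem_apply_eq (hH : ∀ m : M, R.coord m ∈ H) (hsi : IsStronglyIrr R S H X κ)
    {x : M → Q} (hx : x ∈ X) (m t : M) : ∃ x' ∈ X, x' t = x m := by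
  have hallowed : Allowed R H X (fun _ : ({t} : Set M) => x m) :=
    ⟨x, hx, _, H.mul_mem (hH m) (H.inv_mem (hH t)), fun a => by
      rw [mem_singleton_iff.mp a.2, CellSpace.act_coord_mul_inv_coord]⟩
  obtain ⟨x', hx', h, -⟩ := hsi {t} ∅ (finite_singleton t) finite_empty _ _ hallowed
    (allowed_domRestrict hx ∅) (fun _ _ _ hb => hb.elim)
  exact ⟨x', hx', congrFun h ⟨t, rfl⟩⟩

lemma exists_mem_apply_ne (hH : ∀ m : M, R.coord m ∈ H) (hsi : IsStronglyIrr R S H X κ)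
    (hnt : X.Nontrivial) (t : M) (q : Q) : ∃ x ∈ X, x t ≠ q := by
  obtain ⟨x, hx, x', hx', hne⟩ := hnt
  obtain ⟨m, hm⟩ := Function.ne_iff.mp hne
  by_cases hq : x m = q
  · obtain ⟨z, hz, hzt⟩ := exists_mem_apply_eq hH hsi hx' m t
    exact ⟨z, hz, hzt ▸ hq ▸ hm.symm⟩
  · obtain ⟨z, hz, hzt⟩ := exists_mem_apply_eq hH hsi hx m t
    exact ⟨z, hz, hzt ▸ hq⟩

lemma restr_singleton_ssubset (hH : ∀ m : M, R.coord m ∈ H) (hsi : IsStronglyIrr R S H X κ)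
    (hnt : X.Nontrivial) {x : M → Q} (hx : x ∈ X) {B : Set M} (hB : B.Nonempty) :
    restr B {x} ⊂ restr B X := by
  obtain ⟨t, ht⟩ := hB
  refine (ssubset_iff_of_subset (image_mono (singleton_subset_iff.mpr hx))).mpr ?_
  obtain ⟨x', hx', hne⟩ := exists_mem_apply_ne hH hsi hnt t (x t)
  refine ⟨_, ⟨x', hx', rfl⟩, fun ⟨z, hz, h⟩ => hne ?_⟩
  rw [mem_singleton_iff.mp hz] at h
  exact (congrFun h ⟨t, ht⟩).symm

-- With `Real.log 0 = 0`, this covers `X = ∅` too.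
lemma entropy_eq_zero_of_subsingleton {I : Type*} [Nonempty I] [SemilatticeSup I]
    (F : I → Set M) (hX : X.Subsingleton) : entropy R S F X = 0 := by
  rcases hX.eq_empty_or_singleton with rfl | ⟨x, rfl⟩ <;> simp [entropy, restr]

end

theorem stmt12_general {I : Type*} [Nonempty I] [SemilatticeSup I]
    [Finite Q] (R : CellSpace G M) (S : Set G) (hS : R.IsRightGenSet S)
    (H : Subgroup G) (hH : ∀ m : M, R.coord m ∈ H)
    (F : I → Set M) (hF : IsFolnerNet R S F)
    (X : Set (M → Q))
    (κ : ℕ) (hsi : IsStronglyIrr R S H X κ) (hnt : X.Nontrivial)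
    (Y : Set (M → Q)) (hYX : Y ⊆ X)
    (θ θ' : ℕ) (T : Set M) (hT : IsTiling R S θ κ θ' T)
    (hprop : ∀ t ∈ T, restr (R.ball S t θ) Y ⊂ restr (R.ball S t θ) X) :
    entropy R S F Y < entropy R S F X := by
  rcases Y.eq_empty_or_nonempty with rfl | hY
  · obtain ⟨x, hx⟩ := hnt.nonempty
    calc entropy R S F ∅ = entropy R S F {x} := by
          rw [entropy_eq_zero_of_subsingleton F subsingleton_empty,
            entropy_eq_zero_of_subsingleton F subsingleton_singleton]
      _ < entropy R S F X := entropy_lt_of_nonempty hS hF hsi (singleton_subset_iff.mpr hx)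
          (singleton_nonempty x) hT fun t _ =>
            restr_singleton_ssubset hH hsi hnt hx ⟨t, R.mem_ball_self t θ⟩
  · exact entropy_lt_of_nonempty hS hF hsi hYX hY hT hprop

theorem stmt12 {I : Type*} [Nonempty I] [SemilatticeSup I]
    [Finite Q] (R : CellSpace G M) (S : Set G) (hS : R.IsRightGenSet S)
    (H : Subgroup G) (hH : ∀ m : M, R.coord m ∈ H)
    (hAm : RightAmenable R) (F : I → Set M) (hF : IsFolnerNet R S F)
    (X : Set (M → Q)) (hX : IsSubshift R H X)
    (κ : ℕ) (hsi : IsStronglyIrr R S H X κ) (hnt : X.Nontrivial)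
    (Y : Set (M → Q)) (hYX : Y ⊆ X)
    (θ θ' : ℕ) (T : Set M) (hT : IsTiling R S θ κ θ' T)
    (hprop : ∀ t ∈ T, restr (R.ball S t θ) Y ⊂ restr (R.ball S t θ) X) :
    entropy R S F Y < entropy R S F X :=
  stmt12_general R S hS H hH F hF X κ hsi hnt Y hYX θ θ' T hT hprop

end GoE
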